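/- arXiv:2503.17693 — 2 statements merged into one kernel-verified Lean document; each statement's English description precedes it below -/
import Mathlib

section
/- For every s ∈ S, the true error is bounded by the smoothed distance to data via the Lipschitz constant: e(s) ≤ e(s_c) + √2 · L_e · √( d_σ(s; D)² + C₂ ), where s_c is a data point in D attaining the minimum of ‖s − sⁱ‖ over i = 1, …, M′, and C₂ = σ² · log M′ − C₁. (In particular the quantity d_σ(s; D)² + C₂ under the square root is nonnegative.) -/
open Real Finset

/-- For every `s ∈ S`, the true error is bounded by the smoothed distance to data
via the Lipschitz constant: `e(s) ≤ e(s_c) + √2 · L_e · √( d_σ(s; D)² + C₂ )`, where `s_c` is a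
data point attaining the minimum of `‖s − sⁱ‖` over `i = 1, …, M′` and `C₂ = σ² · log M′ − C₁`.
In particular the quantity under the square root is nonnegative. -/
theorem error_bounded_by_smoothed_distance
    (n M' : ℕ) (hn : 1 ≤ n) (hM : 1 ≤ M') (σ : ℝ) (hσ : 0 < σ)
    (s : Fin M' → EuclideanSpace ℝ (Fin n)) (C₁ : ℝ)
    (S : Set (EuclideanSpace ℝ (Fin n))) (hS : ∀ i, s i ∈ S)
    (e : EuclideanSpace ℝ (Fin n) → ℝ) (Le : ℝ) (hLe : 0 ≤ Le)
    (hLip : ∀ x ∈ S, ∀ y ∈ S, |e x - e y| ≤ Le * ‖x - y‖)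
    (x : EuclideanSpace ℝ (Fin n)) (hx : x ∈ S)
    (c : Fin M') (hc : ∀ i : Fin M', ‖x - s c‖ ≤ ‖x - s i‖) :
    0 ≤ (-σ ^ 2 * Real.log (∑ i : Fin M', Real.exp (-‖x - s i‖ ^ 2 / (2 * σ ^ 2))) + C₁)
        + (σ ^ 2 * Real.log (M' : ℝ) - C₁) ∧
    e x ≤ e (s c) + Real.sqrt 2 * Le *
        Real.sqrt
          ((-σ ^ 2 * Real.log (∑ i : Fin M', Real.exp (-‖x - s i‖ ^ 2 / (2 * σ ^ 2))) + C₁)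
            + (σ ^ 2 * Real.log (M' : ℝ) - C₁)) := by
  set Q : ℝ := ∑ i : Fin M', Real.exp (-‖x - s i‖ ^ 2 / (2 * σ ^ 2)) with hQdef
  have hσ2 : (0:ℝ) < σ ^ 2 := by positivity
  have hQpos : 0 < Q := by
    apply Finset.sum_pos (fun i _ => Real.exp_pos _)
    exact Finset.univ_nonempty_iff.mpr ⟨⟨0, hM⟩⟩
  -- Q ≤ M' * exp(-‖x - s c‖²/(2σ²))
  have hQle : Q ≤ (M' : ℝ) * Real.exp (-‖x - s c‖ ^ 2 / (2 * σ ^ 2)) := by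
    rw [hQdef]
    calc ∑ i : Fin M', Real.exp (-‖x - s i‖ ^ 2 / (2 * σ ^ 2))
        ≤ ∑ _i : Fin M', Real.exp (-‖x - s c‖ ^ 2 / (2 * σ ^ 2)) := by
          apply Finset.sum_le_sum
          intro i _
          apply Real.exp_le_exp.mpr
          have h1 : ‖x - s c‖ ^ 2 ≤ ‖x - s i‖ ^ 2 := by
            apply pow_le_pow_left₀ (norm_nonneg _) (hc i)
          have h2 : (0:ℝ) < 2 * σ ^ 2 := by positivity
          gcongr
      _ = (M' : ℝ) * Real.exp (-‖x - s c‖ ^ 2 / (2 * σ ^ 2)) := by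
          simp [Finset.sum_const, nsmul_eq_mul]
  have hlogQ : Real.log Q ≤ Real.log (M' : ℝ) + (-‖x - s c‖ ^ 2 / (2 * σ ^ 2)) := by
    calc Real.log Q ≤ Real.log ((M' : ℝ) * Real.exp (-‖x - s c‖ ^ 2 / (2 * σ ^ 2))) :=
          Real.log_le_log hQpos hQle
      _ = Real.log (M' : ℝ) + (-‖x - s c‖ ^ 2 / (2 * σ ^ 2)) := by
          rw [Real.log_mul (by positivity) (Real.exp_ne_zero _), Real.log_exp]
  set A : ℝ := (-σ ^ 2 * Real.log Q + C₁) + (σ ^ 2 * Real.log (M' : ℝ) - C₁) with hA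
  have hkey : ‖x - s c‖ ^ 2 / 2 ≤ A := by
    have h1 := mul_le_mul_of_nonneg_left hlogQ hσ2.le
    have h3 : σ ^ 2 * (-‖x - s c‖ ^ 2 / (2 * σ ^ 2)) = -‖x - s c‖ ^ 2 / 2 := by
      field_simp
    rw [hA]
    nlinarith [h1, h3]
  have hA0 : 0 ≤ A := le_trans (by positivity) hkey
  refine ⟨hA0, ?_⟩
  have hnorm : ‖x - s c‖ ≤ Real.sqrt 2 * Real.sqrt A := by
    rw [← Real.sqrt_mul_self (norm_nonneg (x - s c)), ← Real.sqrt_mul (by norm_num : (0:ℝ) ≤ 2)]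
    apply Real.sqrt_le_sqrt
    nlinarith [hkey]
  have hlip := hLip x hx (s c) (hS c)
  have := abs_le.mp hlip |>.2
  calc e x ≤ e (s c) + Le * ‖x - s c‖ := by linarith
    _ ≤ e (s c) + Real.sqrt 2 * Le * Real.sqrt A := by
        have : Le * ‖x - s c‖ ≤ Le * (Real.sqrt 2 * Real.sqrt A) :=
          mul_le_mul_of_nonneg_left hnorm hLe
        linarith [this]
end

section
/- As the smoothing degree vanishes, the smoothed minimum distance converges to the standard squared distance: for every fixed s ∈ ℝⁿ, the function σ ↦ −σ² · log( Σ_{i=1}^{M′} exp(−‖s − sⁱ‖²/(2σ²)) ) tends to d(s; D)² := min_{1 ≤ i ≤ M′} (1/2)·‖s − sⁱ‖² as σ → 0 from the right (i.e., along the filter of positive reals approaching 0). -/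
open Real Finset Filter Topology

/-- As the smoothing degree vanishes, the smoothed minimum distance converges to
the standard squared distance: for every fixed `s ∈ ℝⁿ`, the function
`σ ↦ −σ² · log( Σᵢ exp(−‖s − sⁱ‖²/(2σ²)) )` tends to `d(s; D)² := minᵢ (1/2)·‖s − sⁱ‖²`
as `σ → 0⁺`. -/
theorem smoothed_distance_tendsto_min
    (n M' : ℕ) (hn : 1 ≤ n) (hM : 1 ≤ M')
    (s : Fin M' → EuclideanSpace ℝ (Fin n))
    (x : EuclideanSpace ℝ (Fin n)) :
    Filter.Tendsto
      (fun σ : ℝ => -σ ^ 2 * Real.log (∑ i : Fin M', Real.exp (-‖x - s i‖ ^ 2 / (2 * σ ^ 2))))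
      (nhdsWithin 0 (Set.Ioi 0))
      (nhds (Finset.univ.inf' (Finset.univ_nonempty_iff.mpr ⟨⟨0, hM⟩⟩)
        (fun i : Fin M' => (1 / 2) * ‖x - s i‖ ^ 2))) := by
  have hne : (Finset.univ : Finset (Fin M')).Nonempty :=
    Finset.univ_nonempty_iff.mpr ⟨⟨0, hM⟩⟩
  set a : Fin M' → ℝ := fun i => (1 / 2) * ‖x - s i‖ ^ 2 with ha
  set m : ℝ := Finset.univ.inf' hne a with hmdef
  obtain ⟨i₀, -, hi₀⟩ := Finset.exists_mem_eq_inf' hne a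
  have hle : ∀ i, m ≤ a i := fun i => Finset.inf'_le a (Finset.mem_univ i)
  -- the key pointwise identity on positive σ
  have key : ∀ σ : ℝ, 0 < σ →
      -σ ^ 2 * Real.log (∑ i : Fin M', Real.exp (-‖x - s i‖ ^ 2 / (2 * σ ^ 2)))
        = m - σ ^ 2 * Real.log (∑ i : Fin M', Real.exp ((m - a i) / σ ^ 2)) := by
    intro σ hσ
    have hσ2 : (σ : ℝ) ^ 2 ≠ 0 := by positivity
    have hterm : ∀ i : Fin M', Real.exp (-‖x - s i‖ ^ 2 / (2 * σ ^ 2))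
        = Real.exp (-m / σ ^ 2) * Real.exp ((m - a i) / σ ^ 2) := by
      intro i
      rw [← Real.exp_add]
      congr 1
      field_simp [ha]
      ring
    rw [Finset.sum_congr rfl fun i _ => hterm i, ← Finset.mul_sum,
      Real.log_mul (by positivity)
        (ne_of_gt (Finset.sum_pos (fun i _ => Real.exp_pos _) hne)),
      Real.log_exp]
    field_simp
    ring
  -- the remainder term tends to zero
  have h0 : Tendsto (fun σ : ℝ => σ ^ 2 * Real.log (∑ i : Fin M', Real.exp ((m - a i) / σ ^ 2)))
      (nhdsWithin 0 (Set.Ioi 0)) (nhds 0) := by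
    have hg : Tendsto (fun σ : ℝ => σ ^ 2 * Real.log (M' : ℝ))
        (nhdsWithin 0 (Set.Ioi 0)) (nhds 0) := by
      have : Tendsto (fun σ : ℝ => σ ^ 2 * Real.log (M' : ℝ)) (nhds 0) (nhds 0) := by
        have := ((continuous_pow 2).tendsto (0 : ℝ)).mul_const (Real.log (M' : ℝ))
        simpa using this
      exact this.mono_left nhdsWithin_le_nhds
    refine squeeze_zero' ?_ ?_ hg
    · filter_upwards [self_mem_nhdsWithin] with σ hσ
      have hσ : (0 : ℝ) < σ := hσ
      have h1le : (1 : ℝ) ≤ ∑ i : Fin M', Real.exp ((m - a i) / σ ^ 2) := by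
        have : Real.exp ((m - a i₀) / σ ^ 2) = 1 := by
          rw [hmdef, hi₀]; simp
        calc (1 : ℝ) = Real.exp ((m - a i₀) / σ ^ 2) := this.symm
          _ ≤ ∑ i : Fin M', Real.exp ((m - a i) / σ ^ 2) :=
            Finset.single_le_sum (f := fun i => Real.exp ((m - a i) / σ ^ 2))
              (fun i _ => (Real.exp_pos _).le) (Finset.mem_univ i₀)
      exact mul_nonneg (sq_nonneg σ) (Real.log_nonneg h1le)
    · filter_upwards [self_mem_nhdsWithin] with σ hσ
      have hσ : (0 : ℝ) < σ := hσ
      have hσ2 : (0 : ℝ) < σ ^ 2 := by positivity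
      have hsumle : ∑ i : Fin M', Real.exp ((m - a i) / σ ^ 2) ≤ (M' : ℝ) := by
        calc ∑ i : Fin M', Real.exp ((m - a i) / σ ^ 2)
            ≤ ∑ _i : Fin M', (1 : ℝ) := by
              apply Finset.sum_le_sum
              intro i _
              rw [← Real.exp_zero]
              apply Real.exp_le_exp.mpr
              apply div_nonpos_of_nonpos_of_nonneg
              · linarith [hle i]
              · exact hσ2.le
          _ = (M' : ℝ) := by simp
      have hlog : Real.log (∑ i : Fin M', Real.exp ((m - a i) / σ ^ 2)) ≤ Real.log (M' : ℝ) :=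
        Real.log_le_log (Finset.sum_pos (fun i _ => Real.exp_pos _) hne) hsumle
      exact mul_le_mul_of_nonneg_left hlog hσ2.le
  have hfinal : Tendsto (fun σ : ℝ =>
      m - σ ^ 2 * Real.log (∑ i : Fin M', Real.exp ((m - a i) / σ ^ 2)))
      (nhdsWithin 0 (Set.Ioi 0)) (nhds m) := by
    have := tendsto_const_nhds.sub h0 (f := fun _ : ℝ => m)
    simpa using this
  apply hfinal.congr'
  filter_upwards [self_mem_nhdsWithin] with σ hσ
  exact (key σ hσ).symm
end
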